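/- arXiv:1901.02190 — 2 statements merged into one kernel-verified Lean document; each statement's English description precedes it below -/
import Mathlib

section
/- Let ν be a Borel probability measure on ℝ, let κ ∈ ℝ, and let b, p, q : ℝ → ℝ be bounded Borel measurable functions. Suppose that for every z ∈ ℂ with Im z > 0: κ ∫ x/(z−x)² ν(dx) = ∫ b(x)/(z−x)² ν(dx) + (∫ p(x)/(z−x) ν(dx))·(∫ q(x)/(z−x)² ν(dx)) + (∫ q(x)/(z−x) ν(dx))·(∫ p(x)/(z−x)² ν(dx)). Then for every z ∈ ℂ with Im z > 0: κ ∫ x/(z−x) ν(dx) = ∫ b(x)/(z−x) ν(dx) + (∫ p(x)/(z−x) ν(dx))·(∫ q(x)/(z−x) ν(dx)). (All integrands are bounded functions of x for each fixed z with Im z > 0, so all integrals are well defined.) -/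
/-!
Write `S f w = ∫ f x / (w - x) ∂ν` and let `F = κ S x - S b - S p * S q`. Differentiating under
the integral sign gives `(S f)' = -∫ f x / (w - x) ^ 2 ∂ν`, so the hypothesis says precisely that
`F' = 0` on the upper half-plane; being connected, `F` is constant there. Along a vertical ray
`z + t i` every `S f` tends to `0` by dominated convergence, hence `F = 0`. The estimates only
need `‖f x‖ ≤ C (1 + |x|)`, which covers `f x = x` as well as the bounded `b`, `p`, `q`.
-/

open MeasureTheory Filter Topology Complex

noncomputable def stieltjesTransform (ν : Measure ℝ) (f : ℝ → ℂ) (w : ℂ) : ℂ :=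
  ∫ x, f x / (w - x) ∂ν

namespace Complex

lemma im_le_norm_sub_ofReal (w : ℂ) (x : ℝ) : w.im ≤ ‖w - x‖ := by
  simpa using (le_abs_self _).trans (abs_im_le_norm (w - x))

lemma norm_sub_ofReal_le_norm_add_mul_I {z : ℂ} (hz : 0 ≤ z.im) (x : ℝ) {t : ℝ} (ht : 0 ≤ t) :
    ‖z - x‖ ≤ ‖z + t * I - x‖ := by
  rw [norm_def, norm_def]
  apply Real.sqrt_le_sqrt
  simp only [normSq_apply, sub_re, add_re, sub_im, add_im, ofReal_re, ofReal_im, mul_re, mul_im,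
    I_re, I_im]
  nlinarith

lemma norm_sub_ofReal_le_two_mul {z w : ℂ} (hw : ‖w - z‖ ≤ z.im / 2) (x : ℝ) :
    ‖z - x‖ ≤ 2 * ‖w - x‖ := by
  have hz := im_le_norm_sub_ofReal z x
  have : ‖z - x‖ ≤ ‖w - x‖ + ‖w - z‖ := by
    calc ‖z - x‖ = ‖(w - x) - (w - z)‖ := by congr 1; ring
      _ ≤ _ := norm_sub_le _ _
  linarith

lemma one_add_abs_le_norm_sub_ofReal_add (w : ℂ) (x : ℝ) : 1 + |x| ≤ ‖w - x‖ + (1 + ‖w‖) := by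
  have := norm_sub_le w (w - x)
  simp only [sub_sub_cancel, norm_real, Real.norm_eq_abs] at this
  linarith

lemma hasDerivAt_const_div_sub (a c w : ℂ) (h : w - c ≠ 0) :
    HasDerivAt (fun w => a / (w - c)) (-(a / (w - c) ^ 2)) w := by
  have := (((hasDerivAt_id w).sub_const c).inv h).const_mul a
  simp only [id, Pi.inv_apply, ← div_eq_mul_inv] at this
  exact this.congr_deriv (by ring)

end Complex

lemma norm_ofReal_le_mul_one_add_abs {g : ℝ → ℝ} {C : ℝ} (hg : ∀ x, |g x| ≤ C) (x : ℝ) :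
    ‖(g x : ℂ)‖ ≤ C * (1 + |x|) := by
  have hC : 0 ≤ C := (abs_nonneg _).trans (hg 0)
  rw [norm_real, Real.norm_eq_abs]
  nlinarith [hg x, abs_nonneg x]

section StieltjesTransform

variable {ν : Measure ℝ} {f : ℝ → ℂ} {C : ℝ}

lemma norm_div_sub_ofReal_le (hf : ∀ x, ‖f x‖ ≤ C * (1 + |x|)) {w : ℂ} (hw : 0 < w.im) (x : ℝ) :
    ‖f x / (w - x)‖ ≤ C * (1 + (1 + ‖w‖) / w.im) := by
  have hC : 0 ≤ C := by simpa using (norm_nonneg _).trans (hf 0)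
  have hwx := im_le_norm_sub_ofReal w x
  have hpos : 0 < ‖w - x‖ := hw.trans_le hwx
  calc ‖f x / (w - x)‖ ≤ C * (1 + |x|) / ‖w - x‖ := by
        rw [norm_div]; gcongr; exact hf x
    _ ≤ C * (‖w - x‖ + (1 + ‖w‖)) / ‖w - x‖ := by
        gcongr C * ?_ / _; exact one_add_abs_le_norm_sub_ofReal_add w x
    _ = C * (1 + (1 + ‖w‖) / ‖w - x‖) := by field_simp
    _ ≤ C * (1 + (1 + ‖w‖) / w.im) := by gcongr

variable [IsFiniteMeasure ν] (hmeas : Measurable f) (hf : ∀ x, ‖f x‖ ≤ C * (1 + |x|))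
include hmeas hf

lemma integrable_div_sub_ofReal {w : ℂ} (hw : 0 < w.im) :
    Integrable (fun x => f x / (w - x)) ν :=
  (integrable_const _).mono' (by fun_prop : Measurable _).aestronglyMeasurable
    (ae_of_all _ (norm_div_sub_ofReal_le hf hw))

lemma integrable_div_sub_ofReal_sq {w : ℂ} (hw : 0 < w.im) :
    Integrable (fun x => f x / (w - x) ^ 2) ν := by
  refine (integrable_const (C * (1 + (1 + ‖w‖) / w.im) / w.im)).mono'
    (by fun_prop : Measurable _).aestronglyMeasurable (ae_of_all _ fun x => ?_)
  have hbound := norm_div_sub_ofReal_le hf hw x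
  rw [pow_two, ← div_div, norm_div]
  exact div_le_div₀ ((norm_nonneg _).trans hbound) hbound hw (im_le_norm_sub_ofReal w x)

lemma hasDerivAt_stieltjesTransform {z : ℂ} (hz : 0 < z.im) :
    HasDerivAt (stieltjesTransform ν f) (-∫ x, f x / (z - x) ^ 2 ∂ν) z := by
  have key := hasDerivAt_integral_of_dominated_loc_of_deriv_le (μ := ν)
    (F := fun w x => f x / (w - x)) (F' := fun w x => -(f x / (w - x) ^ 2))
    (bound := fun x => 4 * ‖f x / (z - x) ^ 2‖) (Metric.ball_mem_nhds z (half_pos hz))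
    (Eventually.of_forall fun w => (by fun_prop : Measurable _).aestronglyMeasurable)
    (integrable_div_sub_ofReal hmeas hf hz) (by fun_prop : Measurable _).aestronglyMeasurable ?_
    ((integrable_div_sub_ofReal_sq hmeas hf hz).norm.const_mul 4) ?_
  · unfold stieltjesTransform
    rw [← integral_neg]
    exact key.2
  all_goals refine ae_of_all _ fun x w hw => ?_
  all_goals
    have hwz : ‖w - z‖ ≤ z.im / 2 := (mem_ball_iff_norm.mp hw).le
    have hzx := norm_sub_ofReal_le_two_mul hwz x
    have hpos : 0 < ‖z - x‖ := hz.trans_le (im_le_norm_sub_ofReal z x)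
  · have hwx : 0 < ‖w - x‖ := by linarith
    rw [norm_neg, norm_div, norm_div, norm_pow, norm_pow, mul_div_assoc',
      div_le_div_iff₀ (by positivity) (by positivity)]
    nlinarith [mul_le_mul_of_nonneg_left (pow_le_pow_left₀ hpos.le hzx 2) (norm_nonneg (f x))]
  · exact hasDerivAt_const_div_sub _ _ _ (norm_pos_iff.mp (by linarith))

lemma tendsto_stieltjesTransform_add_mul_I_atTop {z : ℂ} (hz : 0 < z.im) :
    Tendsto (fun t : ℝ => stieltjesTransform ν f (z + t * I)) atTop (𝓝 0) := by
  have key := tendsto_integral_filter_of_dominated_convergence (μ := ν) (l := atTop)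
    (F := fun (t : ℝ) x => f x / (z + t * I - x)) (f := fun _ => 0)
    (fun x => ‖f x / (z - x)‖)
    (Eventually.of_forall fun t => (by fun_prop : Measurable _).aestronglyMeasurable) ?_
    (integrable_div_sub_ofReal hmeas hf hz).norm ?_
  · simpa [stieltjesTransform] using key
  · filter_upwards [eventually_ge_atTop 0] with t ht
    refine ae_of_all _ fun x => ?_
    rw [norm_div, norm_div]
    gcongr
    · exact hz.trans_le (im_le_norm_sub_ofReal z x)
    · exact norm_sub_ofReal_le_norm_add_mul_I hz.le x ht
  · refine ae_of_all _ fun x => squeeze_zero_norm' (a := fun t => ‖f x‖ / (z.im + t)) ?_ ?_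
    · filter_upwards [eventually_ge_atTop 0] with t ht
      rw [norm_div]
      gcongr
      simpa using im_le_norm_sub_ofReal (z + t * I) x
    · exact tendsto_const_nhds.div_atTop (tendsto_atTop_add_const_left _ _ tendsto_id)

end StieltjesTransform

lemma eq_zero_of_hasDerivAt_zero_of_tendsto {F : ℂ → ℂ} (hF : ∀ w, 0 < w.im → HasDerivAt F 0 w)
    {z : ℂ} (hz : 0 < z.im) (hlim : Tendsto (fun t : ℝ => F (z + t * I)) atTop (𝓝 0)) :
    F z = 0 := by
  have hconst : ∀ t : ℝ, 0 ≤ t → F (z + t * I) = F z := fun t ht =>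
    (isOpen_lt continuous_const continuous_im).is_const_of_deriv_eq_zero
      (convex_halfSpace_im_gt 0).isPreconnected
      (fun w hw => (hF w hw).differentiableAt.differentiableWithinAt)
      (fun w hw => (hF w hw).deriv) (by simp; linarith) hz
  refine tendsto_nhds_unique (tendsto_const_nhds.congr' ?_) hlim
  filter_upwards [eventually_ge_atTop 0] with t ht using (hconst t ht).symm

/-- integrating the differentiated limit-measure equation: if the
second-order equation holds for all z in the upper half-plane, then so does the
first-order equation. -/
theorem stmt5 (ν : Measure ℝ) [IsProbabilityMeasure ν] (κ : ℝ)
    (b p q : ℝ → ℝ) (hbm : Measurable b) (hpm : Measurable p) (hqm : Measurable q)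
    (Cb Cp Cq : ℝ) (hbB : ∀ x, |b x| ≤ Cb) (hpB : ∀ x, |p x| ≤ Cp) (hqB : ∀ x, |q x| ≤ Cq)
    (h : ∀ z : ℂ, 0 < z.im →
      (κ : ℂ) * ∫ x, (x : ℂ) / (z - x) ^ 2 ∂ν =
        (∫ x, (b x : ℂ) / (z - x) ^ 2 ∂ν)
          + (∫ x, (p x : ℂ) / (z - x) ∂ν) * (∫ x, (q x : ℂ) / (z - x) ^ 2 ∂ν)
          + (∫ x, (q x : ℂ) / (z - x) ∂ν) * (∫ x, (p x : ℂ) / (z - x) ^ 2 ∂ν)) :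
    ∀ z : ℂ, 0 < z.im →
      (κ : ℂ) * ∫ x, (x : ℂ) / (z - x) ∂ν =
        (∫ x, (b x : ℂ) / (z - x) ∂ν)
          + (∫ x, (p x : ℂ) / (z - x) ∂ν) * (∫ x, (q x : ℂ) / (z - x) ∂ν) := by
  intro z hz
  have hx : ∀ x : ℝ, ‖(x : ℂ)‖ ≤ 1 * (1 + |x|) := fun x => by simp
  have hb := norm_ofReal_le_mul_one_add_abs hbB
  have hp := norm_ofReal_le_mul_one_add_abs hpB
  have hq := norm_ofReal_le_mul_one_add_abs hqB
  set F : ℂ → ℂ := fun w => κ * stieltjesTransform ν (↑) w - stieltjesTransform ν (b ·) w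
    - stieltjesTransform ν (p ·) w * stieltjesTransform ν (q ·) w with hF
  have hF' : ∀ w : ℂ, 0 < w.im → HasDerivAt F 0 w := fun w hw =>
    (((hasDerivAt_stieltjesTransform (by fun_prop) hx hw).const_mul (κ : ℂ)).sub
      (hasDerivAt_stieltjesTransform (by fun_prop) hb hw)).sub
      ((hasDerivAt_stieltjesTransform (by fun_prop) hp hw).mul
        (hasDerivAt_stieltjesTransform (by fun_prop) hq hw)) |>.congr_deriv
      (by simp only [stieltjesTransform]; linear_combination -h w hw)
  have hlim : Tendsto (fun t : ℝ => F (z + t * I)) atTop (𝓝 0) := by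
    simpa using (((tendsto_stieltjesTransform_add_mul_I_atTop (by fun_prop) hx hz).const_mul
      (κ : ℂ)).sub (tendsto_stieltjesTransform_add_mul_I_atTop (by fun_prop) hb hz)).sub
      ((tendsto_stieltjesTransform_add_mul_I_atTop (by fun_prop) hp hz).mul
        (tendsto_stieltjesTransform_add_mul_I_atTop (by fun_prop) hq hz))
  have hFz := eq_zero_of_hasDerivAt_zero_of_tendsto hF' hz hlim
  simp only [hF, stieltjesTransform] at hFz
  linear_combination hFz
end

section
/- Let β > 0 and c ≥ 0 be real numbers, and let G be a ℂ-valued function defined for (t, z) with t ∈ (0, ∞) and z ∈ ℂ, Im z ≠ 0, satisfying β t z G(t,z)² + (β t (c−1) − z) G(t,z) + 1 = 0 for all such (t, z). Fix t₀ > 0 and z₀ with Im z₀ ≠ 0, and suppose t ↦ G(t, z₀) has derivative a at t₀ and z ↦ G(t₀, z) is complex differentiable at z₀ with derivative d. Then a = −β(c−1)·d − β·(G(t₀,z₀)² + 2 z₀ G(t₀,z₀)·d). -/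
/-!
Differentiating the quadratic relation along `t` and along `z` gives two linear equations
`D ∂ₜG = -β z G² - β (c - 1) G` and `D ∂_z G = G - β t G²`, where `D = 2βtzG + βt(c-1) - z`
is the derivative of the quadratic in `G`. Since `D` is a square root of the discriminant
`(z - βt(1+√c)²)(z - βt(1-√c)²)`, it vanishes only for real `z`; dividing by `D` gives the
result.
-/

open Filter Topology

theorem HasDerivAt.quadratic_eq_zero {𝕜 𝔸 : Type*} [NontriviallyNormedField 𝕜]
    [NormedCommRing 𝔸] [NormedAlgebra 𝕜 𝔸] {p q r g : 𝕜 → 𝔸} {p' q' r' g' : 𝔸} {x : 𝕜}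
    (hp : HasDerivAt p p' x) (hq : HasDerivAt q q' x) (hr : HasDerivAt r r' x)
    (hg : HasDerivAt g g' x) (h : ∀ᶠ y in 𝓝 x, p y * g y ^ 2 + q y * g y + r y = 0) :
    p' * g x ^ 2 + (2 * p x * g x + q x) * g' + q' * g x + r' = 0 := by
  have hsum := ((hp.mul (hg.pow 2)).add (hq.mul hg)).add hr
  simp only [Pi.pow_apply] at hsum
  have hzero := (hasDerivAt_const x (0 : 𝔸)).congr_of_eventuallyEq h
  linear_combination hsum.unique hzero

theorem two_mul_add_ne_zero_of_im_ne_zero {s c : ℝ} (hc : 0 ≤ c) {z g : ℂ} (hz : z.im ≠ 0)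
    (h : (s : ℂ) * z * g ^ 2 + ((s : ℂ) * ((c : ℂ) - 1) - z) * g + 1 = 0) :
    2 * ((s : ℂ) * z) * g + ((s : ℂ) * ((c : ℂ) - 1) - z) ≠ 0 := by
  have hdiscrim := discrim_eq_sq_of_quadratic_eq_zero
    (a := (s : ℂ) * z) (b := (s : ℂ) * ((c : ℂ) - 1) - z) (c := 1) (x := g)
    (by linear_combination h)
  have hfactor : discrim ((s : ℂ) * z) ((s : ℂ) * ((c : ℂ) - 1) - z) 1 =
      (z - ((s * (1 + √c) ^ 2 : ℝ) : ℂ)) * (z - ((s * (1 - √c) ^ 2 : ℝ) : ℂ)) := by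
    have hsqrt : ((√c : ℝ) : ℂ) ^ 2 = c := mod_cast Real.sq_sqrt hc
    rw [discrim, ← hsqrt]
    push_cast
    ring
  have hsub_ne (x : ℝ) : z - (x : ℂ) ≠ 0 :=
    sub_ne_zero.mpr fun hzx ↦ hz (hzx ▸ Complex.ofReal_im x)
  intro hroot
  apply mul_ne_zero (hsub_ne _) (hsub_ne _)
  rw [← hfactor, hdiscrim, hroot, zero_pow two_ne_zero]

theorem stmt9_general (β c : ℝ) (hc : 0 ≤ c) (G : ℝ → ℂ → ℂ)
    (hG : ∀ t : ℝ, 0 < t → ∀ z : ℂ, z.im ≠ 0 →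
      (β : ℂ) * (t : ℂ) * z * G t z ^ 2 + ((β : ℂ) * (t : ℂ) * ((c : ℂ) - 1) - z) * G t z + 1 = 0)
    (t₀ : ℝ) (ht₀ : 0 < t₀) (z₀ : ℂ) (hz₀ : z₀.im ≠ 0)
    (a d : ℂ)
    (ha : HasDerivAt (fun t : ℝ => G t z₀) a t₀)
    (hd : HasDerivAt (fun z : ℂ => G t₀ z) d z₀) :
    a = -(β : ℂ) * ((c : ℂ) - 1) * d - (β : ℂ) * (G t₀ z₀ ^ 2 + 2 * z₀ * G t₀ z₀ * d) := by
  have hcoe : HasDerivAt (fun t : ℝ ↦ (t : ℂ)) 1 t₀ := by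
    simpa using (hasDerivAt_id t₀).ofReal_comp
  have hderiv_t := HasDerivAt.quadratic_eq_zero ((hcoe.const_mul (β : ℂ)).mul_const z₀)
    (((hcoe.const_mul (β : ℂ)).mul_const ((c : ℂ) - 1)).sub_const z₀)
    (hasDerivAt_const t₀ (1 : ℂ)) ha
    (by filter_upwards [Ioi_mem_nhds ht₀] with t ht using hG t ht z₀ hz₀)
  have hderiv_z := HasDerivAt.quadratic_eq_zero ((hasDerivAt_id' z₀).const_mul ((β : ℂ) * t₀))
    ((hasDerivAt_id' z₀).const_sub ((β : ℂ) * t₀ * ((c : ℂ) - 1)))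
    (hasDerivAt_const z₀ (1 : ℂ)) hd
    (by filter_upwards [Complex.continuous_im.continuousAt.eventually_ne hz₀] with z hz
          using hG t₀ ht₀ z hz)
  have hD := two_mul_add_ne_zero_of_im_ne_zero (s := β * t₀) hc hz₀
    (by exact_mod_cast hG t₀ ht₀ z₀ hz₀)
  push_cast at hD
  refine mul_right_cancel₀ hD ?_
  linear_combination hderiv_t + ((β : ℂ) * ((c : ℂ) - 1) + 2 * (β : ℂ) * z₀ * G t₀ z₀) * hderiv_z

/-- implicit differentiation of βtzG² + (βt(c−1) − z)G + 1 = 0 gives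
∂ₜG = −β(c−1)∂_zG − β(G² + 2zG ∂_zG). -/
theorem stmt9 (β c : ℝ) (hβ : 0 < β) (hc : 0 ≤ c) (G : ℝ → ℂ → ℂ)
    (hG : ∀ t : ℝ, 0 < t → ∀ z : ℂ, z.im ≠ 0 →
      (β : ℂ) * (t : ℂ) * z * G t z ^ 2 + ((β : ℂ) * (t : ℂ) * ((c : ℂ) - 1) - z) * G t z + 1 = 0)
    (t₀ : ℝ) (ht₀ : 0 < t₀) (z₀ : ℂ) (hz₀ : z₀.im ≠ 0)
    (a d : ℂ)
    (ha : HasDerivAt (fun t : ℝ => G t z₀) a t₀)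
    (hd : HasDerivAt (fun z : ℂ => G t₀ z) d z₀) :
    a = -(β : ℂ) * ((c : ℂ) - 1) * d - (β : ℂ) * (G t₀ z₀ ^ 2 + 2 * z₀ * G t₀ z₀ * d) :=
  stmt9_general β c hc G hG t₀ ht₀ z₀ hz₀ a d ha hd
end
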